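/- Define χ(n; d_1,…,d_r; t) := Σ_{j=0}^{r} (-1)^{n+r+j} Σ_{1 ≤ k_1 < ⋯ < k_j ≤ r} C(t·c_1 - 1 + d_{k_1} + ⋯ + d_{k_j}, n+r), where c_1 = n + r + 1 - Σ d_i. If c_1 < 0, all d_i > 1, t ∈ ℚ with 1/2 ≤ t ≤ 1 and t·c_1 ∈ ℤ, then χ(n; d; t) ≥ C(n + 1 - t·c_1, n+1) + (-1)^n · C(n + 1 - (1-t)·c_1, n+1). -/

import Mathlib

open Finset

/-- Generalized binomial coefficient `C(a, k) = a(a-1)⋯(a-k+1)/k!`. -/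
def gbc (a : ℚ) (k : ℕ) : ℚ :=
  (∏ i ∈ Finset.range k, (a - i)) / (Nat.factorial k)


/-- Euler–Poincaré characteristic `χ(X_n(d), K^t)` of the complete intersection,
via the combinatorial formula, where `c₁ = n + r + 1 - ∑ dᵢ`. -/
def chiCI (n r : ℕ) (d : Fin r → ℤ) (t : ℚ) : ℚ :=
  ∑ S ∈ (Finset.univ : Finset (Fin r)).powerset,
    (-1) ^ (n + r + S.card) *
      gbc (t * ((n : ℚ) + r + 1 - ∑ i, (d i : ℚ)) - 1 + ∑ i ∈ S, (d i : ℚ)) (n + r)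

/-!
Write `dᵢ = eᵢ + 1`, `N = ∑ eᵢ = n + 1 - c₁` and `m = t·c₁`. Since
`∏ (X^{dᵢ} - 1) = (X - 1)^r ∏ (1 + X + ⋯ + X^{eᵢ})` and `C(a + 1, k + 1) - C(a, k + 1) = C(a, k)`,
the alternating sum `χ` collapses to `∑_{j ≤ e} f(|j|)` over the box `0 ≤ jᵢ ≤ eᵢ`, where
`f(K) = (-1)^n C(m - 1 + K, n)`, while the left-hand side telescopes to `∑_{K ≤ N} f(K)`.
The involution `j ↦ e - j` of the box and the surjectivity of `j ↦ |j|` onto `[0, N]` reduce the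
inequality to `f(K) + f(N - K) ≥ 0`. This is a sign property of `C(u, n) + C(v, n)` at integers
with `u + v ≤ n - 1`; here `u + v = n - 1 + (2t - 1)c₁`.
-/

open Polynomial

theorem gbc_eq_choose (a : ℚ) (k : ℕ) : gbc a k = Ring.choose a k := by
  rw [Ring.choose_eq_smul, gbc, ← descPochhammer_eval_eq_prod_range, smul_eq_mul,
    ← descPochhammer_map (algebraMap ℤ ℚ), eval_map_algebraMap, aeval_eq_smeval, div_eq_inv_mul]

theorem gbc_add_one_succ (a : ℚ) (k : ℕ) : gbc (a + 1) (k + 1) = gbc a k + gbc a (k + 1) := by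
  simp only [gbc_eq_choose, Ring.choose_succ_succ]

theorem gbc_natCast (N k : ℕ) : gbc N k = N.choose k := by
  rw [gbc_eq_choose, Ring.choose_natCast]

theorem neg_one_pow_mul_gbc (a : ℚ) (k : ℕ) : (-1) ^ k * gbc a k = gbc (k - 1 - a) k := by
  have h := Ring.choose_neg (a + 1 - k) k
  rw [show -(a + 1 - k) = k - 1 - a by ring, show a + 1 - k + k - 1 = a by ring] at h
  rw [gbc_eq_choose, gbc_eq_choose, h, Units.smul_def, Int.coe_negOnePow_natCast, zsmul_eq_mul]
  push_cast
  ring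

theorem sum_range_gbc_add (x : ℚ) (k N : ℕ) :
    ∑ K ∈ range N, gbc (x + K) k = gbc (x + N) (k + 1) - gbc x (k + 1) := by
  induction N with
  | zero => simp
  | succ N ih =>
    rw [sum_range_succ, ih, Nat.cast_succ, ← add_assoc, gbc_add_one_succ]
    ring

theorem gbc_intCast_of_nonneg {z : ℤ} (hz : 0 ≤ z) (k : ℕ) : gbc z k = z.toNat.choose k := by
  rw [← gbc_natCast, ← Int.cast_natCast, Int.toNat_of_nonneg hz]

theorem neg_one_pow_mul_gbc_intCast_of_neg {z : ℤ} (hz : z < 0) (k : ℕ) :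
    (-1) ^ k * gbc z k = ((k : ℤ) - 1 - z).toNat.choose k := by
  rw [neg_one_pow_mul_gbc, ← gbc_intCast_of_nonneg (by omega)]
  push_cast
  rfl

theorem neg_one_pow_mul_gbc_add_gbc_nonneg {n : ℕ} {u v : ℤ} (huv : u + v ≤ n - 1) :
    0 ≤ (-1) ^ n * (gbc u n + gbc v n) := by
  wlog hle : u ≤ v generalizing u v
  · rw [add_comm]
    exact this (by omega) (by omega)
  rw [mul_add]
  rcases lt_or_ge u 0 with hu | hu
  · rw [neg_one_pow_mul_gbc_intCast_of_neg hu]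
    rcases lt_or_ge v 0 with hv | hv
    · rw [neg_one_pow_mul_gbc_intCast_of_neg hv]
      positivity
    · have hvu : v.toNat ≤ ((n : ℤ) - 1 - u).toNat := by omega
      have hchoose : (v.toNat.choose n : ℚ) ≤ ((n : ℤ) - 1 - u).toNat.choose n := by
        exact_mod_cast Nat.choose_le_choose n hvu
      have hsign := neg_abs_le ((-1 : ℚ) ^ n * v.toNat.choose n)
      rw [abs_mul, abs_neg_one_pow, one_mul, Nat.abs_cast] at hsign
      rw [gbc_intCast_of_nonneg hv]
      linarith
  · rw [gbc_intCast_of_nonneg hu, gbc_intCast_of_nonneg (hu.trans hle),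
      Nat.choose_eq_zero_of_lt (by omega), Nat.choose_eq_zero_of_lt (by omega)]
    simp

theorem gbc_add_neg_one_pow_mul_gbc_eq_sum_range (x : ℚ) (n N : ℕ) :
    gbc (n + 1 - x) (n + 1) + (-1) ^ n * gbc (x + N) (n + 1) =
      ∑ K ∈ range (N + 1), (-1) ^ n * gbc (x - 1 + K) n := by
  have hreflect := neg_one_pow_mul_gbc (x - 1) (n + 1)
  rw [show ((n + 1 : ℕ) : ℚ) - 1 - (x - 1) = n + 1 - x by push_cast; ring] at hreflect
  rw [← mul_sum, sum_range_gbc_add, ← hreflect]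
  push_cast
  ring_nf

noncomputable def gbcFunctional (x : ℚ) (k : ℕ) : ℚ[X] →ₗ[ℚ] ℚ :=
  lsum fun K => gbc (x + K) k • LinearMap.id

theorem gbcFunctional_monomial (x : ℚ) (k K : ℕ) (a : ℚ) :
    gbcFunctional x k (monomial K a) = a * gbc (x + K) k := by
  simp [gbcFunctional, mul_comm]

theorem gbcFunctional_X_pow (x : ℚ) (k K : ℕ) : gbcFunctional x k (X ^ K) = gbc (x + K) k := by
  rw [← monomial_one_right_eq_X_pow, gbcFunctional_monomial, one_mul]

theorem gbcFunctional_X_sub_one_mul (x : ℚ) (k : ℕ) (p : ℚ[X]) :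
    gbcFunctional x (k + 1) ((X - 1) * p) = gbcFunctional x k p := by
  have : (gbcFunctional x (k + 1)).comp (LinearMap.mulLeft ℚ (X - 1)) = gbcFunctional x k := by
    ext K : 1
    ext
    simp only [LinearMap.comp_apply, LinearMap.mulLeft_apply, sub_mul, one_mul, X_mul_monomial,
      map_sub, gbcFunctional_monomial]
    push_cast
    rw [← add_assoc, gbc_add_one_succ]
    ring
  exact LinearMap.congr_fun this p

theorem gbcFunctional_X_sub_one_pow_mul (x : ℚ) (k r : ℕ) (p : ℚ[X]) :
    gbcFunctional x (k + r) ((X - 1) ^ r * p) = gbcFunctional x k p := by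
  induction r with
  | zero => simp
  | succ r ih => rw [pow_succ', mul_assoc, ← add_assoc, gbcFunctional_X_sub_one_mul, ih]

section

variable {ι : Type*} [Fintype ι] [DecidableEq ι]

theorem prod_X_pow_sub_one_eq_sum_powerset (D : ι → ℕ) :
    ∏ i, (X ^ D i - 1 : ℚ[X]) =
      ∑ S ∈ univ.powerset, (-1 : ℚ) ^ (Fintype.card ι + #S) • X ^ ∑ i ∈ S, D i := by
  simp_rw [sub_eq_add_neg, prod_add, prod_const, prod_pow_eq_pow_sum,
    card_sdiff_of_subset (subset_univ _), card_univ]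
  refine sum_congr rfl fun S _ => ?_
  have hS : #S ≤ Fintype.card ι := card_le_univ S
  rw [show Fintype.card ι + #S = Fintype.card ι - #S + 2 * #S by omega, pow_add, pow_mul,
    neg_one_sq, one_pow, mul_one, mul_comm, smul_eq_C_mul]
  simp

theorem prod_X_pow_sub_one_eq_mul_sum_piFinset (D : ι → ℕ) :
    ∏ i, (X ^ D i - 1 : ℚ[X]) =
      (X - 1) ^ Fintype.card ι * ∑ j ∈ Fintype.piFinset fun i => range (D i), X ^ ∑ i, j i := by
  simp_rw [← mul_geom_sum, prod_mul_distrib, prod_const, card_univ, prod_univ_sum,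
    prod_pow_eq_pow_sum]

theorem sum_powerset_neg_one_pow_mul_gbc (D : ι → ℕ) (x : ℚ) (k : ℕ) :
    ∑ S ∈ univ.powerset,
        (-1) ^ (Fintype.card ι + #S) * gbc (x + ∑ i ∈ S, (D i : ℚ)) (k + Fintype.card ι) =
      ∑ j ∈ Fintype.piFinset fun i => range (D i), gbc (x + ∑ i, (j i : ℚ)) k := by
  have h := congrArg (gbcFunctional x (k + Fintype.card ι))
    ((prod_X_pow_sub_one_eq_sum_powerset D).symm.trans (prod_X_pow_sub_one_eq_mul_sum_piFinset D))
  simpa only [map_sum, map_smul, gbcFunctional_X_pow, gbcFunctional_X_sub_one_pow_mul,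
    smul_eq_mul, Nat.cast_sum] using h

theorem piFinset_range_add_one (e : ι → ℕ) :
    Fintype.piFinset (fun i => range (e i + 1)) = Iic e := by
  ext j
  simp [Pi.le_def]

theorem exists_le_sum_eq (e : ι → ℕ) {K : ℕ} (hK : K ≤ ∑ i, e i) : ∃ j ≤ e, ∑ i, j i = K := by
  suffices ∀ s : Finset ι, ∀ K ≤ ∑ i ∈ s, e i, ∃ j ≤ e, ∑ i ∈ s, j i = K from this _ K hK
  intro s
  induction s using Finset.induction_on with
  | empty => exact fun K hK => ⟨0, fun _ => Nat.zero_le _, by simp_all⟩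
  | insert a s ha ih =>
    intro K hK
    rw [sum_insert ha] at hK
    obtain ⟨j, hje, hj⟩ := ih (K - min K (e a)) (by omega)
    refine ⟨Function.update j a (min K (e a)), fun i => ?_, ?_⟩
    · rcases eq_or_ne i a with rfl | hi
      · simp
      · simpa [hi] using hje i
    · rw [sum_insert ha, Function.update_self, sum_update_of_notMem ha, hj]
      omega

theorem image_sum_Iic (e : ι → ℕ) :
    (Iic e).image (fun j => ∑ i, j i) = range (∑ i, e i + 1) := by
  ext K
  simp only [mem_image, mem_Iic, mem_range, Nat.lt_succ_iff]
  constructor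
  · rintro ⟨j, hje, rfl⟩
    exact sum_le_sum fun i _ => hje i
  · exact fun hK => exists_le_sum_eq e hK

theorem sum_Iic_comp_sum_eq_reflect {M : Type*} [AddCommMonoid M] (e : ι → ℕ) (f : ℕ → M) :
    ∑ j ∈ Iic e, f (∑ i, j i) = ∑ j ∈ Iic e, f (∑ i, e i - ∑ i, j i) := by
  refine sum_nbij' (fun j => e - j) (fun j => e - j) (fun j _ => by simp) (fun j _ => by simp)
    (fun j hj => tsub_tsub_cancel_of_le (mem_Iic.1 hj))
    (fun j hj => tsub_tsub_cancel_of_le (mem_Iic.1 hj)) fun j hj => ?_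
  have hje := mem_Iic.1 hj
  have hsum : ∑ i, j i ≤ ∑ i, e i := sum_le_sum fun i _ => hje i
  rw [Pi.sub_def, sum_tsub_distrib _ fun i _ => hje i, tsub_tsub_cancel_of_le hsum]

theorem sum_range_le_sum_Iic {M : Type*} [AddCommGroup M] [LinearOrder M] [IsOrderedAddMonoid M]
    (e : ι → ℕ) (f : ℕ → M) (hf : ∀ K ≤ ∑ i, e i, 0 ≤ f K + f (∑ i, e i - K)) :
    ∑ K ∈ range (∑ i, e i + 1), f K ≤ ∑ j ∈ Iic e, f (∑ i, j i) := by
  set N := ∑ i, e i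
  refine le_of_nsmul_le_nsmul_right two_ne_zero ?_
  calc 2 • ∑ K ∈ range (N + 1), f K = ∑ K ∈ range (N + 1), (f K + f (N - K)) := by
        rw [sum_add_distrib, two_nsmul]
        congr 1
        simpa using (sum_range_reflect f (N + 1)).symm
    _ = ∑ K ∈ (Iic e).image (fun j => ∑ i, j i), (f K + f (N - K)) := by rw [image_sum_Iic]
    _ ≤ ∑ j ∈ Iic e, (f (∑ i, j i) + f (N - ∑ i, j i)) :=
        sum_image_le_of_nonneg fun K hK =>
          hf K (Nat.lt_succ_iff.1 (mem_range.1 (image_sum_Iic e ▸ hK)))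
    _ = 2 • ∑ j ∈ Iic e, f (∑ i, j i) := by
        rw [sum_add_distrib, two_nsmul, ← sum_Iic_comp_sum_eq_reflect]

end

theorem chiCI_eq_sum_Iic (n r : ℕ) (e : Fin r → ℕ) (t : ℚ) :
    chiCI n r (fun i => e i + 1) t = ∑ j ∈ Iic e, (-1) ^ n *
      gbc (t * ((n : ℚ) + r + 1 - ∑ i, ((e i + 1 : ℤ) : ℚ)) - 1 + ↑(∑ i, j i)) n := by
  have hbox := sum_powerset_neg_one_pow_mul_gbc (fun i => e i + 1)
    (t * ((n : ℚ) + r + 1 - ∑ i, ((e i + 1 : ℤ) : ℚ)) - 1) n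
  simp only [Fintype.card_fin, piFinset_range_add_one] at hbox
  rw [chiCI, ← mul_sum]
  simp only [Nat.cast_sum]
  rw [← hbox, mul_sum]
  refine sum_congr rfl fun S _ => ?_
  push_cast
  ring

theorem chi_neg_c1_bound_general (n r : ℕ) (d : Fin r → ℤ) (hd : ∀ i, 1 < d i)
    (hc : (n : ℤ) + r + 1 - ∑ i, d i < 0) (t : ℚ) (ht1 : 1 / 2 ≤ t)
    (hint : ∃ m : ℤ, t * ((n : ℚ) + r + 1 - ∑ i, (d i : ℚ)) = m) :
    gbc ((n : ℚ) + 1 - t * ((n : ℚ) + r + 1 - ∑ i, (d i : ℚ))) (n + 1) +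
        (-1) ^ n * gbc ((n : ℚ) + 1 - (1 - t) * ((n : ℚ) + r + 1 - ∑ i, (d i : ℚ))) (n + 1) ≤
      chiCI n r d t := by
  obtain ⟨e, rfl⟩ : ∃ e : Fin r → ℕ, d = fun i => (e i : ℤ) + 1 :=
    ⟨fun i => (d i - 1).toNat, funext fun i => by have := hd i; simp only; omega⟩
  obtain ⟨m, hm⟩ := hint
  beta_reduce at hc hm ⊢
  have hc₁ : (n : ℚ) + r + 1 - ∑ i, ((e i + 1 : ℤ) : ℚ) = n + 1 - ∑ i, (e i : ℚ) := by
    push_cast [sum_add_distrib]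
    simp only [sum_const, card_univ, Fintype.card_fin, nsmul_eq_mul, mul_one]
    ring
  have hneg : (n : ℚ) + 1 - ∑ i, (e i : ℚ) < 0 := by
    rw [← hc₁]
    exact_mod_cast hc
  have h2m : 2 * m ≤ (n : ℤ) + 1 - (∑ i, e i : ℕ) := by
    have : (2 * m : ℚ) ≤ n + 1 - ∑ i, (e i : ℚ) := by rw [← hm, hc₁]; nlinarith
    exact_mod_cast this
  have hsecond : (n : ℚ) + 1 - (1 - t) * (n + r + 1 - ∑ i, ((e i + 1 : ℤ) : ℚ)) =
      m + ↑(∑ i, e i) := by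
    rw [← hm, hc₁]
    push_cast
    ring
  rw [chiCI_eq_sum_Iic, hm, hsecond, gbc_add_neg_one_pow_mul_gbc_eq_sum_range]
  refine sum_range_le_sum_Iic e _ fun K hK => ?_
  have := neg_one_pow_mul_gbc_add_gbc_nonneg (n := n) (u := m - 1 + K)
    (v := m - 1 + (∑ i, e i - K : ℕ)) (by omega)
  rw [← mul_add]
  exact_mod_cast this

theorem chi_neg_c1_bound (n r : ℕ) (hr : 1 ≤ r) (d : Fin r → ℤ) (hd : ∀ i, 1 < d i)
    (hc : (n : ℤ) + r + 1 - ∑ i, d i < 0) (t : ℚ) (ht1 : 1 / 2 ≤ t) (ht2 : t ≤ 1)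
    (hint : ∃ m : ℤ, t * ((n : ℚ) + r + 1 - ∑ i, (d i : ℚ)) = m) :
    gbc ((n : ℚ) + 1 - t * ((n : ℚ) + r + 1 - ∑ i, (d i : ℚ))) (n + 1) +
        (-1) ^ n * gbc ((n : ℚ) + 1 - (1 - t) * ((n : ℚ) + r + 1 - ∑ i, (d i : ℚ))) (n + 1) ≤
      chiCI n r d t :=
  chi_neg_c1_bound_general n r d hd hc t ht1 hint
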